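/- Let n > 1 and m > 1, and let T be a bi-valent tree in Bi(m,n). Then there exists an internal vertex w of T that is adjacent to exactly n-1 external vertices; letting L be the set of these n-1 external vertices, the subgraph T' of T induced on V(T) \ L is a bi-valent tree in Bi(m-1,n) in which w is an external vertex (has degree 1), and T is isomorphic to the extension Ext(T', w). In particular, every tree in Bi(m,n) with m > 1 is isomorphic to Ext(T', v) for some T' in Bi(m-1,n) and some external vertex v of T'. -/

import Mathlib

open SimpleGraph

noncomputable def gdeg {V : Type*} (G : SimpleGraph V) (v : V) : ℕ :=
  (G.neighborSet v).ncard

def GraphExt {W : Type*} (G : SimpleGraph W) (v : W) (k : ℕ) : SimpleGraph (W ⊕ Fin k) :=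
  SimpleGraph.fromRel (fun x y =>
    (∃ a b, x = Sum.inl a ∧ y = Sum.inl b ∧ G.Adj a b) ∨
    (∃ i : Fin k, x = Sum.inl v ∧ y = Sum.inr i))

section Helpers

variable {V : Type*} {T : SimpleGraph V}

lemma leaf_neighborSet {u w : V} (h1 : gdeg T u = 1) (h : T.Adj u w) :
    T.neighborSet u = {w} := by
  obtain ⟨z, hz⟩ := Set.ncard_eq_one.mp h1
  have hw : w ∈ T.neighborSet u := h
  rw [hz, Set.mem_singleton_iff] at hw
  rw [hz, hw]

lemma deg_one_support {a b x : V} (p : T.Walk a b) (hp : p.IsPath)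
    (hx : x ∈ p.support) (h1 : gdeg T x = 1) : x = a ∨ x = b := by
  induction p with
  | nil => left; simpa using hx
  | @cons a c b h q ih =>
    rw [Walk.cons_isPath_iff] at hp
    by_cases hxa : x = a
    · exact Or.inl hxa
    have hxq : x ∈ q.support := by
      simpa [hxa] using hx
    by_cases hxc : x = c
    · subst hxc
      cases q with
      | nil => exact Or.inr rfl
      | @cons _ e _ h2 q2 =>
        exfalso
        have hN := leaf_neighborSet h1 h.symm
        have hd : e ∈ T.neighborSet x := h2
        rw [hN, Set.mem_singleton_iff] at hd
        exact hp.2 (by simp [← hd, q2.start_mem_support])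
    · rcases ih hp.1 hxq with h' | h'
      · exact absurd h' hxc
      · exact Or.inr h'

lemma reach_induce {s : Set V} : ∀ {a b : V} (p : T.Walk a b),
    (∀ x ∈ p.support, x ∈ s) → ∀ (ha : a ∈ s) (hb : b ∈ s),
    (T.induce s).Reachable ⟨a, ha⟩ ⟨b, hb⟩ := by
  intro a b p
  induction p with
  | nil => intro _ ha hb; exact Reachable.refl _
  | @cons a c b h q ih =>
    intro hsup ha hb
    have hc : c ∈ s := hsup c (by simp)
    have hadj : (T.induce s).Adj ⟨a, ha⟩ ⟨c, hc⟩ := by simpa using h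
    exact hadj.reachable.trans (ih (fun x hx => hsup x (by simp [hx])) hc hb)

lemma gdeg_induce (s : Set V) (x : s) :
    gdeg (T.induce s) x = (T.neighborSet x.val ∩ s).ncard := by
  have himg : Subtype.val '' ((T.induce s).neighborSet x) = T.neighborSet x.val ∩ s := by
    ext z
    simp only [Set.mem_image, mem_neighborSet, comap_adj, Function.Embedding.coe_subtype,
      Set.mem_inter_iff, Subtype.exists, exists_and_right, exists_eq_right]
    constructor
    · rintro ⟨hz, hadj⟩; exact ⟨hadj, hz⟩
    · rintro ⟨hadj, hz⟩; exact ⟨hz, hadj⟩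
  rw [gdeg, ← Set.ncard_image_of_injective _ Subtype.coe_injective, himg]

end Helpers

set_option maxHeartbeats 1000000 in
/-- Let `n > 1`, `m > 1`, and let `T ∈ Bi(m, n)`. Then there is an internal
vertex `w` adjacent to exactly `n - 1` external vertices; letting `L` be the set of these
external neighbors, the induced subgraph `T'` of `T` on the complement of `L` is a bi-valent
tree in `Bi(m - 1, n)` in which `w` has degree `1`, and `T` is isomorphic to the extension
`Ext(T', w)` by `n - 1` vertices. -/
theorem stmt_6 {V : Type*} [Fintype V] {n m : ℕ} (hn : 1 < n) (hmm : 1 < m)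
    (T : SimpleGraph V) (hT : T.IsTree)
    (hbi : ∀ v, gdeg T v = 1 ∨ gdeg T v = n)
    (hm : {v | gdeg T v = n}.ncard = m) :
    ∃ w, gdeg T w = n ∧
      {u | T.Adj w u ∧ gdeg T u = 1}.ncard = n - 1 ∧
      ∀ hw : w ∈ ({u | T.Adj w u ∧ gdeg T u = 1}ᶜ : Set V),
        (T.induce {u | T.Adj w u ∧ gdeg T u = 1}ᶜ).IsTree ∧
        (∀ x, gdeg (T.induce {u | T.Adj w u ∧ gdeg T u = 1}ᶜ) x = 1 ∨
              gdeg (T.induce {u | T.Adj w u ∧ gdeg T u = 1}ᶜ) x = n) ∧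
        {x | gdeg (T.induce {u | T.Adj w u ∧ gdeg T u = 1}ᶜ) x = n}.ncard = m - 1 ∧
        gdeg (T.induce {u | T.Adj w u ∧ gdeg T u = 1}ᶜ) ⟨w, hw⟩ = 1 ∧
        Nonempty
          (T ≃g GraphExt (T.induce {u | T.Adj w u ∧ gdeg T u = 1}ᶜ) ⟨w, hw⟩ (n - 1)) := by
  classical
  have hconn := hT.isConnected
  set I : Set V := {v | gdeg T v = n} with hIdef
  have hIfin : I.Finite := Set.toFinite _
  have hI2 : 1 < I.ncard := by rw [hm]; exact hmm
  obtain ⟨r, w0, hr, hw0, hrw0⟩ := (Set.one_lt_ncard_iff hIfin).mp hI2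
  obtain ⟨w, hwI, hwmax⟩ := Set.exists_max_image I (T.dist r) hIfin ⟨r, hr⟩
  set d := T.dist r w with hddef
  have hd1 : 1 ≤ d := by
    have h0 : 0 < T.dist r w0 := hconn.pos_dist_of_ne (fun h => hrw0 h)
    exact lt_of_lt_of_le h0 (hwmax w0 hw0)
  have hrw : r ≠ w := by
    intro h; rw [← h] at hddef; simp [SimpleGraph.dist_self] at hddef; omega
  obtain ⟨p0, hp0⟩ := hconn.exists_walk_length_eq_dist r w
  set p := p0.bypass with hpdef
  have hpp : p.IsPath := Walk.bypass_isPath p0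
  have hplen : p.length = d := by
    have h1 := Walk.length_bypass_le p0
    have h2 := SimpleGraph.dist_le p
    rw [hp0, ← hddef] at h1
    rw [hpdef] at h2 ⊢
    omega
  have hrealize : ∀ {x : V} (q : T.Walk r x), q.IsPath → q.length = T.dist r x := by
    intro x q hq
    obtain ⟨s0, hs0⟩ := hconn.exists_walk_length_eq_dist r x
    have heq : s0.bypass = q := (hT.existsUnique_path r x).unique (Walk.bypass_isPath s0) hq
    have h1 := Walk.length_bypass_le s0
    rw [heq] at h1
    have h2 := SimpleGraph.dist_le q
    omega
  -- extract the penultimate vertex y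
  obtain ⟨y, hwy, q, hq⟩ := Walk.exists_eq_cons_of_ne (fun h => hrw h.symm) p.reverse
  have hqpath : (Walk.cons hwy q).IsPath := hq ▸ hpp.reverse
  have hqpath' : q.IsPath := (Walk.cons_isPath_iff _ _).mp hqpath |>.1
  have hwq : w ∉ q.support := (Walk.cons_isPath_iff _ _).mp hqpath |>.2
  have hsupp : ∀ x, x ∈ p.support ↔ (x = w ∨ x ∈ q.support) := by
    intro x
    rw [show p.support = p.reverse.support.reverse by simp [Walk.support_reverse],
      List.mem_reverse, hq, Walk.support_cons]
    simp
  have hyp : y ∈ p.support := (hsupp y).mpr (Or.inr q.start_mem_support)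
  have hyI : gdeg T y = n := by
    rcases hbi y with h1 | h2
    · exfalso
      rcases deg_one_support p hpp hyp h1 with h | h
      · rw [h] at h1
        have hr' : gdeg T r = n := hr
        omega
      · exact hwy.ne' h
    · exact h2
  -- classification of neighbors of w
  have hclass : ∀ x, T.Adj w x → x ≠ y → gdeg T x = 1 := by
    intro x hwx hxy
    by_cases hxs : x ∈ p.support
    · exfalso
      apply hxy
      have hxw : x ≠ w := hwx.ne'
      have hxq : x ∈ q.support := by
        rcases (hsupp x).mp hxs with h | h
        · exact absurd h hxw
        · exact h
      have htk : (Walk.cons hwy (q.takeUntil x hxq)).IsPath := by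
        rw [Walk.cons_isPath_iff]
        exact ⟨hqpath'.takeUntil hxq,
          fun hws => hwq (Walk.support_takeUntil_subset _ hxq hws)⟩
      have hedge : (Walk.cons hwx Walk.nil : T.Walk w x).IsPath := by
        simp [Walk.isPath_def, hwx.ne]
      have heq := (hT.existsUnique_path w x).unique htk hedge
      have hsupeq := congrArg Walk.support heq
      rw [Walk.support_cons, Walk.support_cons, Walk.support_nil,
        Walk.support_eq_cons (q.takeUntil x hxq)] at hsupeq
      injection hsupeq with h1 h2
      injection h2 with h3 _
      exact h3.symm
    · have hconcat : (p.concat hwx).IsPath := by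
        rw [Walk.isPath_def, Walk.support_concat]
        simp only [List.concat_eq_append, List.nodup_append, List.nodup_cons]
        exact ⟨hpp.support_nodup, by simp, by simpa using fun (a : V) (ha : a ∈ p.support) (h : a = x) => hxs (h ▸ ha)⟩
      have hdx : T.dist r x = d + 1 := by
        rw [← hrealize (p.concat hwx) hconcat, Walk.length_concat, hplen]
      rcases hbi x with h1 | h2
      · exact h1
      · exfalso
        have := hwmax x h2
        rw [hdx] at this
        omega
  -- the set L of external neighbors of w
  set L : Set V := {u | T.Adj w u ∧ gdeg T u = 1} with hLdef
  have hLfin : L.Finite := Set.toFinite _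
  have hyne1 : gdeg T y ≠ 1 := by rw [hyI]; omega
  have hLeq : L = T.neighborSet w \ {y} := by
    ext u
    simp only [hLdef, Set.mem_setOf_eq, Set.mem_diff, mem_neighborSet, Set.mem_singleton_iff]
    constructor
    · rintro ⟨h1, h2⟩; exact ⟨h1, fun h => hyne1 (h ▸ h2)⟩
    · rintro ⟨h1, h2⟩; exact ⟨h1, hclass u h1 h2⟩
  have hwdeg : gdeg T w = n := hwI
  have hLcard : L.ncard = n - 1 := by
    have hymem : y ∈ T.neighborSet w := (T.mem_neighborSet w y).mpr hwy
    rw [hLeq, Set.ncard_diff_singleton_of_mem hymem]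
    have hNn : (T.neighborSet w).ncard = n := hwdeg
    rw [hNn]
  have hNL : ∀ u ∈ L, T.neighborSet u = {w} := fun u hu => leaf_neighborSet hu.2 hu.1.symm
  have hwcap : T.neighborSet w ∩ Lᶜ = {y} := by
    ext z
    simp only [Set.mem_inter_iff, mem_neighborSet, Set.mem_compl_iff, Set.mem_singleton_iff]
    constructor
    · rintro ⟨h1, h2⟩
      by_contra hzy
      exact h2 ⟨h1, hclass z h1 hzy⟩
    · rintro rfl
      exact ⟨hwy, fun hyL => hyne1 hyL.2⟩
  have hNnotw : ∀ a, a ≠ w → T.neighborSet a ∩ Lᶜ = T.neighborSet a := by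
    intro a ha
    apply Set.inter_eq_left.mpr
    intro z hz hzL
    apply ha
    have hmem : a ∈ T.neighborSet z := (hz : T.Adj a z).symm
    rwa [hNL z hzL, Set.mem_singleton_iff] at hmem
  have hAdjL : ∀ v ∈ L, ∀ u, T.Adj u v ↔ u = w := by
    intro v hv u
    constructor
    · intro h
      have hmem : u ∈ T.neighborSet v := h.symm
      rwa [hNL v hv, Set.mem_singleton_iff] at hmem
    · rintro rfl; exact hv.1
  refine ⟨w, hwdeg, hLcard, ?_⟩
  intro hw
  -- degrees in the induced graph
  have hgw : gdeg (T.induce Lᶜ) ⟨w, hw⟩ = 1 := by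
    rw [gdeg_induce, hwcap, Set.ncard_singleton]
  have hga : ∀ x : ↥(Lᶜ), x.val ≠ w → gdeg (T.induce Lᶜ) x = gdeg T x.val := by
    intro x hx
    rw [gdeg_induce, hNnotw x.val hx]
    rfl
  have hbi' : ∀ x : ↥(Lᶜ), gdeg (T.induce Lᶜ) x = 1 ∨ gdeg (T.induce Lᶜ) x = n := by
    intro x
    by_cases hx : x.val = w
    · left
      have hxx : x = ⟨w, hw⟩ := Subtype.ext hx
      rw [hxx]; exact hgw
    · rw [hga x hx]; exact hbi x.val
  -- count of internal vertices
  have hIL : I \ {w} ⊆ Lᶜ := by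
    rintro z ⟨hz, -⟩ hzL
    have h1 : gdeg T z = 1 := hzL.2
    have h2 : gdeg T z = n := hz
    omega
  have hcount : {x : ↥(Lᶜ) | gdeg (T.induce Lᶜ) x = n}.ncard = m - 1 := by
    have hseteq : {x : ↥(Lᶜ) | gdeg (T.induce Lᶜ) x = n} = Subtype.val ⁻¹' (I \ {w}) := by
      ext x
      simp only [Set.mem_setOf_eq, Set.mem_preimage, Set.mem_diff, Set.mem_singleton_iff]
      by_cases hx : x.val = w
      · constructor
        · intro h
          exfalso
          have hxx : x = ⟨w, hw⟩ := Subtype.ext hx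
          rw [hxx, hgw] at h
          omega
        · rintro ⟨-, h2⟩; exact absurd hx h2
      · rw [hga x hx]
        constructor
        · intro h; exact ⟨h, hx⟩
        · rintro ⟨h, -⟩; exact h
    rw [hseteq, Set.ncard_preimage_of_injective_subset_range Subtype.coe_injective
      (by rw [Subtype.range_coe]; exact hIL),
      Set.ncard_diff_singleton_of_mem hwI, hm]
  -- the induced graph is a tree
  have hacyc : (T.induce Lᶜ).IsAcyclic := by
    intro v c hc
    have hinj : Function.Injective (SimpleGraph.Embedding.induce (G := T) Lᶜ).toHom :=
      Subtype.coe_injective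
    exact hT.IsAcyclic _ ((Walk.map_isCycle_iff_of_injective hinj).mpr hc)
  have hpre : (T.induce Lᶜ).Preconnected := by
    rintro ⟨a, ha⟩ ⟨b, hb⟩
    obtain ⟨pab, hpab, -⟩ := hT.existsUnique_path a b
    refine reach_induce pab ?_ ha hb
    intro x hxs
    simp only [Set.mem_compl_iff]
    intro hxL
    rcases deg_one_support pab hpab hxs hxL.2 with rfl | rfl
    · exact ha hxL
    · exact hb hxL
  have htree : (T.induce Lᶜ).IsTree := by
    refine ⟨?_, hacyc⟩
    rw [connected_iff]
    exact ⟨hpre, ⟨⟨w, hw⟩⟩⟩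
  -- the isomorphism
  haveI : Fintype ↥L := hLfin.fintype
  have hcardL : Fintype.card ↥L = n - 1 := by
    rw [← Nat.card_eq_fintype_card, Nat.card_coe_set_eq]
    exact hLcard
  let eL : ↥L ≃ Fin (n - 1) := Fintype.equivFinOfCardEq hcardL
  let e : V ≃ (↥(Lᶜ) ⊕ Fin (n - 1)) :=
    { toFun := fun v => if h : v ∈ L then Sum.inr (eL ⟨v, h⟩) else Sum.inl ⟨v, h⟩
      invFun := Sum.elim (fun a => a.val) (fun i => (eL.symm i).val)
      left_inv := by
        intro v
        by_cases h : v ∈ L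
        · simp [h]
        · simp [h]
      right_inv := by
        rintro (a | i)
        · have h : a.val ∉ L := a.prop
          simp [h]
        · have h : (eL.symm i).val ∈ L := (eL.symm i).prop
          simp [h] }
  have hGE : ∀ x y, (GraphExt (T.induce Lᶜ) ⟨w, hw⟩ (n - 1)).Adj x y ↔ x ≠ y ∧
      ((∃ a b, x = Sum.inl a ∧ y = Sum.inl b ∧ (T.induce Lᶜ).Adj a b) ∨
        (∃ i : Fin (n-1), x = Sum.inl ⟨w, hw⟩ ∧ y = Sum.inr i) ∨
       (∃ a b, y = Sum.inl a ∧ x = Sum.inl b ∧ (T.induce Lᶜ).Adj a b) ∨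
        (∃ i : Fin (n-1), y = Sum.inl ⟨w, hw⟩ ∧ x = Sum.inr i)) := by
    intro x y
    show (SimpleGraph.fromRel _).Adj x y ↔ _
    rw [fromRel_adj, or_assoc]
  refine ⟨htree, hbi', hcount, hgw, ⟨{ toEquiv := e, map_rel_iff' := ?_ }⟩⟩
  intro u v
  show (GraphExt (T.induce Lᶜ) ⟨w, hw⟩ (n - 1)).Adj (e u) (e v) ↔ T.Adj u v
  by_cases hu : u ∈ L <;> by_cases hv : v ∈ L
  · -- both in L
    have heu : e u = Sum.inr (eL ⟨u, hu⟩) := by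
      simp only [e, Equiv.coe_fn_mk]; exact dif_pos hu
    have hev : e v = Sum.inr (eL ⟨v, hv⟩) := by
      simp only [e, Equiv.coe_fn_mk]; exact dif_pos hv
    rw [heu, hev, hGE]
    constructor
    · rintro ⟨-, h | h | h | h⟩
      · obtain ⟨a, b, h1, -, -⟩ := h; exact absurd h1 (by simp)
      · obtain ⟨i, h1, -⟩ := h; exact absurd h1 (by simp)
      · obtain ⟨a, b, -, h2, -⟩ := h; exact absurd h2 (by simp)
      · obtain ⟨i, h1, -⟩ := h; exact absurd h1 (by simp)
    · intro hadj
      exact absurd ((hAdjL v hv u).mp hadj) (fun h => hw (show w ∈ L from h ▸ hu))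
  · -- u ∈ L, v ∉ L
    have heu : e u = Sum.inr (eL ⟨u, hu⟩) := by
      simp only [e, Equiv.coe_fn_mk]; exact dif_pos hu
    have hev : e v = Sum.inl ⟨v, hv⟩ := by
      simp only [e, Equiv.coe_fn_mk]; exact dif_neg hv
    rw [heu, hev, hGE]
    constructor
    · rintro ⟨-, h | h | h | h⟩
      · obtain ⟨a, b, h1, -, -⟩ := h; exact absurd h1 (by simp)
      · obtain ⟨i, h1, -⟩ := h; exact absurd h1 (by simp)
      · obtain ⟨a, b, -, h2, -⟩ := h; exact absurd h2 (by simp)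
      · obtain ⟨i, h1, -⟩ := h
        have hvw : v = w := congrArg Subtype.val (Sum.inl.inj h1)
        exact ((hAdjL u hu v).mpr hvw).symm
    · intro hadj
      have hvw : v = w := (hAdjL u hu v).mp hadj.symm
      exact ⟨by simp, Or.inr (Or.inr (Or.inr ⟨eL ⟨u, hu⟩,
        congrArg Sum.inl (Subtype.ext hvw), rfl⟩))⟩
  · -- u ∉ L, v ∈ L
    have heu : e u = Sum.inl ⟨u, hu⟩ := by
      simp only [e, Equiv.coe_fn_mk]; exact dif_neg hu
    have hev : e v = Sum.inr (eL ⟨v, hv⟩) := by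
      simp only [e, Equiv.coe_fn_mk]; exact dif_pos hv
    rw [heu, hev, hGE]
    constructor
    · rintro ⟨-, h | h | h | h⟩
      · obtain ⟨a, b, -, h2, -⟩ := h; exact absurd h2 (by simp)
      · obtain ⟨i, h1, -⟩ := h
        have huw : u = w := congrArg Subtype.val (Sum.inl.inj h1)
        exact (hAdjL v hv u).mpr huw
      · obtain ⟨a, b, h1, -, -⟩ := h; exact absurd h1 (by simp)
      · obtain ⟨i, -, h2⟩ := h; exact absurd h2 (by simp)
    · intro hadj
      have huw : u = w := (hAdjL v hv u).mp hadj
      exact ⟨by simp, Or.inr (Or.inl ⟨eL ⟨v, hv⟩,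
        congrArg Sum.inl (Subtype.ext huw), rfl⟩)⟩
  · -- both not in L
    have heu : e u = Sum.inl ⟨u, hu⟩ := by
      simp only [e, Equiv.coe_fn_mk]; exact dif_neg hu
    have hev : e v = Sum.inl ⟨v, hv⟩ := by
      simp only [e, Equiv.coe_fn_mk]; exact dif_neg hv
    rw [heu, hev, hGE]
    constructor
    · rintro ⟨-, h | h | h | h⟩
      · obtain ⟨a, b, h1, h2, h3⟩ := h
        obtain rfl : a = ⟨u, hu⟩ := (Sum.inl.inj h1).symm
        obtain rfl : b = ⟨v, hv⟩ := (Sum.inl.inj h2).symm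
        exact h3
      · obtain ⟨i, -, h2⟩ := h; exact absurd h2 (by simp)
      · obtain ⟨a, b, h1, h2, h3⟩ := h
        obtain rfl : a = ⟨v, hv⟩ := (Sum.inl.inj h1).symm
        obtain rfl : b = ⟨u, hu⟩ := (Sum.inl.inj h2).symm
        exact h3.symm
      · obtain ⟨i, -, h2⟩ := h; exact absurd h2 (by simp)
    · intro hadj
      refine ⟨fun hcon => hadj.ne (congrArg Subtype.val (Sum.inl.inj hcon)), ?_⟩
      exact Or.inl ⟨⟨u, hu⟩, ⟨v, hv⟩, rfl, rfl, hadj⟩
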